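/- Let Ω ⊂ ℝ² be open bounded with Lipschitz boundary, and let (ψ, A) be a (weak) solution of the Ginzburg–Landau equation −(∇ − iκHA)²ψ = κ²(1 − |ψ|²)ψ in Ω with Neumann boundary condition ν·(∇ − iκHA)ψ = 0 on ∂Ω. Then for any real-valued f ∈ C²(Ω̄), ∫_Ω |(∇ − iκHA)(fψ)|² dx = κ² ∫_Ω f² (1 − |ψ|²)|ψ|² dx + ∫_Ω |∇f|² |ψ|² dx. -/

import Mathlib

open MeasureTheory

/-- The magnetic gradient `(∇ - iA)u` of `u : ℝ² → ℂ`, as a pair of complex components. -/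
noncomputable def magGrad (A : ℝ × ℝ → ℝ × ℝ) (u : ℝ × ℝ → ℂ) (x : ℝ × ℝ) : ℂ × ℂ :=
  (fderiv ℝ u x (1, 0) - Complex.I * ((A x).1 : ℂ) * u x,
   fderiv ℝ u x (0, 1) - Complex.I * ((A x).2 : ℂ) * u x)

/-- The squared norm `|(∇ - iA)u|²` of the magnetic gradient. -/
noncomputable def magGradSq (A : ℝ × ℝ → ℝ × ℝ) (u : ℝ × ℝ → ℂ) (x : ℝ × ℝ) : ℝ :=
  ‖(magGrad A u x).1‖ ^ 2 + ‖(magGrad A u x).2‖ ^ 2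

/-- `(ψ, A)` is a weak solution of the Ginzburg-Landau equation
`-(∇ - iκHA)²ψ = κ²(1 - |ψ|²)ψ` in `Ω` with the Neumann magnetic boundary condition
`ν·(∇ - iκHA)ψ = 0` on `∂Ω`: for every test function `φ` (not required to vanish at the
boundary, so that the Neumann condition is encoded as the natural boundary condition),
`∫_Ω ⟨(∇-iκHA)ψ, (∇-iκHA)φ⟩ = κ² ∫_Ω (1-|ψ|²) ψ φ̄`. -/
def IsGLWeakSolution (Ω : Set (ℝ × ℝ)) (κ H : ℝ)
    (ψ : ℝ × ℝ → ℂ) (A : ℝ × ℝ → ℝ × ℝ) : Prop :=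
  ∀ φ : ℝ × ℝ → ℂ, ContDiff ℝ 2 φ →
    ∫ x in Ω,
        ((magGrad (fun y => (κ * H) • A y) ψ x).1 *
            (starRingEnd ℂ) ((magGrad (fun y => (κ * H) • A y) φ x).1) +
          (magGrad (fun y => (κ * H) • A y) ψ x).2 *
            (starRingEnd ℂ) ((magGrad (fun y => (κ * H) • A y) φ x).2))
      = ((κ : ℂ) ^ 2) *
          ∫ x in Ω, ((1 - (‖ψ x‖ : ℂ) ^ 2) * ψ x * (starRingEnd ℂ) (φ x))

/-! Test the weak formulation with `φ = f²ψ`. Pointwise, the Leibniz rule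
`(∇ - iA)(fψ) = f (∇ - iA)ψ + ψ ∇f` gives the IMS identity
`|(∇ - iA)(fψ)|² = Re ⟨(∇ - iA)ψ, (∇ - iA)(f²ψ)⟩ + |∇f|² |ψ|²`,
and the right-hand side of the weak formulation for `φ = f²ψ` is the real number
`κ² ∫ f² (1 - |ψ|²) |ψ|²`. Integrating the pointwise identity gives the claim; continuity of
everything in sight and boundedness of `Ω` make all integrals finite. -/

open ComplexConjugate

/-- `⟨(∇ - iA)u, (∇ - iA)φ⟩`, the integrand of `IsGLWeakSolution`. -/
noncomputable def magPairing (A : ℝ × ℝ → ℝ × ℝ) (u φ : ℝ × ℝ → ℂ) (x : ℝ × ℝ) : ℂ :=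
  (magGrad A u x).1 * conj (magGrad A φ x).1 + (magGrad A u x).2 * conj (magGrad A φ x).2

theorem Continuous.integrableOn_of_isBounded {X E : Type*} [PseudoMetricSpace X] [ProperSpace X]
    [MeasurableSpace X] [OpensMeasurableSpace X] {μ : Measure X} [IsFiniteMeasureOnCompacts μ]
    [NormedAddCommGroup E] {g : X → E} (hg : Continuous g) {s : Set X}
    (hs : Bornology.IsBounded s) : IntegrableOn g s μ :=
  (hg.locallyIntegrable.integrableOn_isCompact hs.isCompact_closure).mono_set subset_closure

theorem fderiv_ofReal_mul_apply {f : ℝ × ℝ → ℝ} {u : ℝ × ℝ → ℂ} {x : ℝ × ℝ}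
    (hf : DifferentiableAt ℝ f x) (hu : DifferentiableAt ℝ u x) (v : ℝ × ℝ) :
    fderiv ℝ (fun y => (f y : ℂ) * u y) x v = f x * fderiv ℝ u x v + fderiv ℝ f x v * u x := by
  have hfC : HasFDerivAt (fun y => (f y : ℂ)) (Complex.ofRealCLM.comp (fderiv ℝ f x)) x :=
    Complex.ofRealCLM.hasFDerivAt.comp x hf.hasFDerivAt
  rw [fderiv_fun_mul hfC.differentiableAt hu, hfC.fderiv]
  simp [mul_comm]

theorem magGrad_ofReal_mul (A : ℝ × ℝ → ℝ × ℝ) {f : ℝ × ℝ → ℝ} {u : ℝ × ℝ → ℂ} {x : ℝ × ℝ}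
    (hf : DifferentiableAt ℝ f x) (hu : DifferentiableAt ℝ u x) :
    magGrad A (fun y => (f y : ℂ) * u y) x =
      (f x * (magGrad A u x).1 + fderiv ℝ f x (1, 0) * u x,
       f x * (magGrad A u x).2 + fderiv ℝ f x (0, 1) * u x) := by
  simp only [magGrad, fderiv_ofReal_mul_apply hf hu]
  ext <;> ring

/-- With `D` a component of `(∇ - iA)ψ` and `g` the matching partial derivative of `f`,
`F (F D + g Ψ) + g (F Ψ)` is the component of `(∇ - iA)(f · fψ)` given by the Leibniz rule. -/
theorem norm_ofReal_mul_add_sq (F g : ℝ) (D Ψ : ℂ) :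
    ‖F * D + g * Ψ‖ ^ 2 = (D * conj (F * (F * D + g * Ψ) + g * (F * Ψ))).re + g ^ 2 * ‖Ψ‖ ^ 2 := by
  simp only [Complex.sq_norm, Complex.normSq_apply, Complex.mul_re, Complex.add_re,
    Complex.add_im, Complex.mul_im, Complex.ofReal_re, Complex.ofReal_im, Complex.conj_re,
    Complex.conj_im]
  ring

theorem magGradSq_ofReal_mul (A : ℝ × ℝ → ℝ × ℝ) {f : ℝ × ℝ → ℝ} {ψ : ℝ × ℝ → ℂ} {x : ℝ × ℝ}
    (hf : Differentiable ℝ f) (hψ : Differentiable ℝ ψ) :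
    magGradSq A (fun y => (f y : ℂ) * ψ y) x =
      (magPairing A ψ (fun y => (f y : ℂ) * ((f y : ℂ) * ψ y)) x).re
        + (fderiv ℝ f x (1, 0) ^ 2 + fderiv ℝ f x (0, 1) ^ 2) * ‖ψ x‖ ^ 2 := by
  have hfψ : Differentiable ℝ (fun y => (f y : ℂ) * ψ y) :=
    fun y => ((Complex.ofRealCLM.differentiable.comp hf) y).mul (hψ y)
  rw [magGradSq, magPairing, magGrad_ofReal_mul A (hf x) (hfψ x),
    magGrad_ofReal_mul A (hf x) (hψ x), norm_ofReal_mul_add_sq, norm_ofReal_mul_add_sq,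
    Complex.add_re]
  ring

theorem continuous_magGrad {A : ℝ × ℝ → ℝ × ℝ} {u : ℝ × ℝ → ℂ} (hA : Continuous A)
    (hu : ContDiff ℝ 1 u) : Continuous (magGrad A u) := by
  have hdu (v : ℝ × ℝ) : Continuous fun x => fderiv ℝ u x v :=
    (hu.continuous_fderiv one_ne_zero).clm_apply continuous_const
  have hAC (p : ℝ × ℝ → ℝ) (hp : Continuous p) : Continuous fun x => ((p (A x) : ℝ) : ℂ) :=
    Complex.continuous_ofReal.comp (hp.comp hA)
  exact ((hdu _).sub ((continuous_const.mul (hAC _ continuous_fst)).mul hu.continuous)).prodMk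
    ((hdu _).sub ((continuous_const.mul (hAC _ continuous_snd)).mul hu.continuous))

theorem continuous_magPairing {A : ℝ × ℝ → ℝ × ℝ} {u φ : ℝ × ℝ → ℂ} (hA : Continuous A)
    (hu : ContDiff ℝ 1 u) (hφ : ContDiff ℝ 1 φ) : Continuous (magPairing A u φ) := by
  have hgu := continuous_magGrad hA hu
  have hgφ := continuous_magGrad hA hφ
  exact (hgu.fst.mul (Complex.continuous_conj.comp hgφ.fst)).add
    (hgu.snd.mul (Complex.continuous_conj.comp hgφ.snd))

theorem one_sub_sq_mul_mul_conj_ofReal_mul (F : ℝ) (Ψ : ℂ) :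
    (1 - (‖Ψ‖ : ℂ) ^ 2) * Ψ * conj (F * (F * Ψ)) = ((F ^ 2 * (1 - ‖Ψ‖ ^ 2) * ‖Ψ‖ ^ 2 : ℝ) : ℂ) := by
  calc (1 - (‖Ψ‖ : ℂ) ^ 2) * Ψ * conj (F * (F * Ψ))
      = (1 - (‖Ψ‖ : ℂ) ^ 2) * F ^ 2 * (Ψ * conj Ψ) := by
        simp only [map_mul, Complex.conj_ofReal]; ring
    _ = _ := by rw [Complex.mul_conj']; push_cast; ring

theorem IsGLWeakSolution.integral_magPairing_ofReal_mul_ofReal_mul {Ω : Set (ℝ × ℝ)} {κ H : ℝ}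
    {ψ : ℝ × ℝ → ℂ} {A : ℝ × ℝ → ℝ × ℝ} (hsol : IsGLWeakSolution Ω κ H ψ A) {f : ℝ × ℝ → ℝ}
    (hφ : ContDiff ℝ 2 fun y => (f y : ℂ) * ((f y : ℂ) * ψ y)) :
    ∫ x in Ω, magPairing (fun y => (κ * H) • A y) ψ (fun y => (f y : ℂ) * ((f y : ℂ) * ψ y)) x
      = ((κ ^ 2 * ∫ x in Ω, f x ^ 2 * (1 - ‖ψ x‖ ^ 2) * ‖ψ x‖ ^ 2 : ℝ) : ℂ) := by
  have h := hsol _ hφ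
  simp only [one_sub_sq_mul_mul_conj_ofReal_mul, integral_complex_ofReal] at h
  rw [Complex.ofReal_mul, Complex.ofReal_pow]
  exact h

theorem gl_localized_energy_identity_general
    (Ω : Set (ℝ × ℝ)) (hΩb : Bornology.IsBounded Ω)
    (κ H : ℝ)
    (ψ : ℝ × ℝ → ℂ) (hψ : ContDiff ℝ 2 ψ)
    (A : ℝ × ℝ → ℝ × ℝ) (hA : ContDiff ℝ 1 A)
    (hsol : IsGLWeakSolution Ω κ H ψ A)
    (f : ℝ × ℝ → ℝ) (hf : ContDiff ℝ 2 f) :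
    ∫ x in Ω, magGradSq (fun y => (κ * H) • A y) (fun y => (f y : ℂ) * ψ y) x
      = κ ^ 2 * (∫ x in Ω, (f x) ^ 2 * (1 - ‖ψ x‖ ^ 2) * ‖ψ x‖ ^ 2)
        + ∫ x in Ω, ((fderiv ℝ f x (1, 0)) ^ 2 + (fderiv ℝ f x (0, 1)) ^ 2) * ‖ψ x‖ ^ 2 := by
  set B : ℝ × ℝ → ℝ × ℝ := fun y => (κ * H) • A y
  set φ : ℝ × ℝ → ℂ := fun y => (f y : ℂ) * ((f y : ℂ) * ψ y)
  have hfC : ContDiff ℝ 2 (fun y => (f y : ℂ)) := Complex.ofRealCLM.contDiff.comp hf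
  have hφ : ContDiff ℝ 2 φ := hfC.mul (hfC.mul hψ)
  have hB : Continuous B := by fun_prop
  have hint : IntegrableOn (magPairing B ψ φ) Ω :=
    (continuous_magPairing hB (hψ.of_le one_le_two)
      (hφ.of_le one_le_two)).integrableOn_of_isBounded hΩb
  have hcutoff : IntegrableOn
      (fun x => (fderiv ℝ f x (1, 0) ^ 2 + fderiv ℝ f x (0, 1) ^ 2) * ‖ψ x‖ ^ 2) Ω := by
    have hdf (v : ℝ × ℝ) : Continuous fun x => fderiv ℝ f x v :=
      (hf.continuous_fderiv two_ne_zero).clm_apply continuous_const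
    exact ((((hdf _).pow 2).add ((hdf _).pow 2)).mul
      (hψ.continuous.norm.pow 2)).integrableOn_of_isBounded hΩb
  calc ∫ x in Ω, magGradSq B (fun y => (f y : ℂ) * ψ y) x
      = ∫ x in Ω, (magPairing B ψ φ x).re
          + (fderiv ℝ f x (1, 0) ^ 2 + fderiv ℝ f x (0, 1) ^ 2) * ‖ψ x‖ ^ 2 := by
        congr 1 with x
        exact magGradSq_ofReal_mul B (hf.differentiable two_ne_zero)
          (hψ.differentiable two_ne_zero)
    _ = (∫ x in Ω, magPairing B ψ φ x).re
          + ∫ x in Ω, (fderiv ℝ f x (1, 0) ^ 2 + fderiv ℝ f x (0, 1) ^ 2) * ‖ψ x‖ ^ 2 := by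
        have hre : IntegrableOn (fun x => (magPairing B ψ φ x).re) Ω := hint.re
        rw [integral_add hre hcutoff]
        exact congrArg (· + _) (integral_re hint)
    _ = _ := by rw [hsol.integral_magPairing_ofReal_mul_ofReal_mul hφ, Complex.ofReal_re]

/-- For a weak solution `(ψ, A)` of the Ginzburg-Landau equation with Neumann boundary
condition and any real-valued `f ∈ C²(Ω̄)`:
`∫_Ω |(∇-iκHA)(fψ)|² = κ² ∫_Ω f²(1-|ψ|²)|ψ|² + ∫_Ω |∇f|²|ψ|²`. -/
theorem gl_localized_energy_identity
    (Ω : Set (ℝ × ℝ)) (hΩ : IsOpen Ω) (hΩb : Bornology.IsBounded Ω)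
    (κ H : ℝ) (hκ : 0 < κ) (hH : 0 < H)
    (ψ : ℝ × ℝ → ℂ) (hψ : ContDiff ℝ 2 ψ)
    (A : ℝ × ℝ → ℝ × ℝ) (hA : ContDiff ℝ 1 A)
    (hsol : IsGLWeakSolution Ω κ H ψ A)
    (f : ℝ × ℝ → ℝ) (hf : ContDiff ℝ 2 f) :
    ∫ x in Ω, magGradSq (fun y => (κ * H) • A y) (fun y => (f y : ℂ) * ψ y) x
      = κ ^ 2 * (∫ x in Ω, (f x) ^ 2 * (1 - ‖ψ x‖ ^ 2) * ‖ψ x‖ ^ 2)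
        + ∫ x in Ω, ((fderiv ℝ f x (1, 0)) ^ 2 + (fderiv ℝ f x (0, 1)) ^ 2) * ‖ψ x‖ ^ 2 :=
  gl_localized_energy_identity_general Ω hΩb κ H ψ hψ A hA hsol f hf
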